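/- arXiv:1912.02144 — 3 statements merged into one kernel-verified Lean document; each statement's English description precedes it below -/
import Mathlib

section
/- Let k be an algebraically closed field and let p, q ∈ k[t] be polynomials such that the k-subalgebra of k[t] generated by p and q is all of k[t], and deg(p) < deg(q). Then either 1 ∈ {deg(p), deg(q)}, or 2 ≤ deg(p) ≤ deg(q) − 2. -/
/-!
Let `n = deg p`. Then `k[t]` is a free `k[p]`-module with basis `1, t, …, t^(n-1)`, so by
Cayley–Hamilton `q` satisfies a monic equation of degree `n` over `k[p]`, and `k[p, q]` is the
`k[p]`-span of `1, q, …, q^(n-1)`. If `deg q = n + 1`, the summand `a_i(p) q^i` has degree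
`≡ i (mod n)`, so the degree of a sum `∑ a_i(p) q^i` is the largest degree of a summand, which
is never `1` when `n ≥ 2`; hence `t ∉ k[p, q]`. The cases `deg p ≤ 1` are elementary.
-/

open Polynomial

section Domain

variable {k : Type*} [CommRing k] [IsDomain k]

theorem natDegree_dvd_of_mem_adjoin_singleton {p r : k[X]} (hr : r ∈ Algebra.adjoin k {p}) :
    p.natDegree ∣ r.natDegree := by
  rw [Algebra.adjoin_singleton_eq_range_aeval] at hr
  obtain ⟨g, rfl⟩ := hr
  rw [AlgHom.toRingHom_eq_coe, RingHom.coe_coe, ← comp_eq_aeval, natDegree_comp]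
  exact Dvd.intro_left _ rfl

theorem natDegree_eq_one_of_X_mem_adjoin_singleton {q : k[X]} (h : X ∈ Algebra.adjoin k {q}) :
    q.natDegree = 1 := by
  rw [Algebra.adjoin_singleton_eq_range_aeval] at h
  obtain ⟨g, hg⟩ := h
  rw [AlgHom.toRingHom_eq_coe, RingHom.coe_coe, ← comp_eq_aeval] at hg
  have := congrArg natDegree hg
  rw [natDegree_comp, natDegree_X] at this
  exact Nat.eq_one_of_mul_eq_one_left this

theorem natDegree_smul_pow {p q : k[X]} {r : Algebra.adjoin k {p}} {i : ℕ}
    (h : r • q ^ i ≠ 0) : (r • q ^ i).natDegree = (r : k[X]).natDegree + i * q.natDegree := by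
  rw [Subalgebra.smul_def, smul_eq_mul] at h ⊢
  rw [natDegree_mul (left_ne_zero_of_mul h) (right_ne_zero_of_mul h), natDegree_pow]

/-- Since `deg q` is invertible mod `deg p` and every element of `k[p]` has degree divisible by
`deg p`, the nonzero summands have pairwise distinct degrees. -/
theorem degree_sum_smul_pow_eq_sup {p q : k[X]} (hcop : q.natDegree.Coprime p.natDegree)
    (c : Fin p.natDegree → Algebra.adjoin k {p}) :
    (∑ i, c i • q ^ (i : ℕ)).degree =
      Finset.univ.sup fun i => (c i • q ^ (i : ℕ)).degree := by
  refine degree_sum_eq_of_disjoint _ _ fun i ⟨_, hi⟩ j ⟨_, hj⟩ hij hdeg => hij ?_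
  have hmod : ∀ {l : Fin p.natDegree}, c l • q ^ (l : ℕ) ≠ 0 →
      (c l • q ^ (l : ℕ)).natDegree ≡ q.natDegree * l [MOD p.natDegree] := by
    intro l hl
    rw [natDegree_smul_pow hl, mul_comm]
    have := Nat.modEq_zero_iff_dvd.2 (natDegree_dvd_of_mem_adjoin_singleton (c l).2)
    simpa using this.add_right (q.natDegree * l)
  have hnat : (c i • q ^ (i : ℕ)).natDegree = (c j • q ^ (j : ℕ)).natDegree :=
    natDegree_eq_of_degree_eq hdeg
  have := ((hmod hi).symm.trans (hnat ▸ hmod hj)).cancel_left_of_coprime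
    (Nat.coprime_comm.1 hcop)
  exact Fin.ext (Nat.ModEq.eq_of_lt_of_lt this i.2 j.2)

theorem linearIndependent_pow_X (p : k[X]) :
    LinearIndependent (Algebra.adjoin k {p}) fun i : Fin p.natDegree => (X : k[X]) ^ (i : ℕ) := by
  refine Fintype.linearIndependent_iff.2 fun c hc i => ?_
  have hsup := degree_sum_smul_pow_eq_sup (q := X) (by simp) c
  rw [hc, degree_zero, eq_comm, Finset.sup_eq_bot_iff] at hsup
  have := degree_eq_bot.1 (hsup i (Finset.mem_univ i))
  rw [Subalgebra.smul_def, smul_eq_mul, mul_eq_zero] at this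
  exact Subtype.ext (this.resolve_right (pow_ne_zero _ X_ne_zero))

end Domain

theorem mem_span_pow_of_aeval_eq_zero {R S : Type*} [CommRing R] [Nontrivial R] [CommRing S]
    [Algebra R S] {x y : S} {f : R[X]} (hf : f.Monic) (hx : aeval x f = 0)
    (hy : y ∈ Algebra.adjoin R {x}) :
    y ∈ Submodule.span R (Set.range fun i : Fin f.natDegree => x ^ (i : ℕ)) := by
  rw [Algebra.adjoin_singleton_eq_range_aeval] at hy
  obtain ⟨g, rfl⟩ := hy
  refine PowerBasis.mem_span_pow'.2
    ⟨g %ₘ f, (degree_modByMonic_lt _ hf).trans_le degree_le_natDegree, ?_⟩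
  rw [AlgHom.toRingHom_eq_coe, RingHom.coe_coe, aeval_modByMonic_eq_self_of_root hx]

section Field

variable {k : Type*} [Field k]

theorem span_pow_X_eq_top {p : k[X]} (hp : 0 < p.degree) :
    Submodule.span (Algebra.adjoin k {p})
      (Set.range fun i : Fin p.natDegree => (X : k[X]) ^ (i : ℕ)) = ⊤ := by
  refine Submodule.eq_top_iff'.2 fun f => ?_
  induction f using degree_lt_wf.induction with
  | _ f ih =>
  rcases eq_or_ne f 0 with rfl | hf
  · exact zero_mem _
  rw [← EuclideanDomain.div_add_mod f p]
  refine add_mem ?_ (PowerBasis.mem_span_pow'.2 ⟨(f % p).map (algebraMap k _), ?_, ?_⟩)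
  · have := Submodule.smul_mem _
      (⟨p, Algebra.self_mem_adjoin_singleton k p⟩ : Algebra.adjoin k {p})
      (ih _ (degree_div_lt hf hp))
    rwa [Subalgebra.smul_def, smul_eq_mul] at this
  · rw [degree_map, ← degree_eq_natDegree (ne_zero_of_degree_gt hp)]
    exact EuclideanDomain.mod_lt f (ne_zero_of_degree_gt hp)
  · rw [aeval_map_algebraMap, aeval_X_left_apply]

noncomputable def basisPowX {p : k[X]} (hp : 0 < p.degree) :
    Module.Basis (Fin p.natDegree) (Algebra.adjoin k {p}) k[X] :=
  .mk (linearIndependent_pow_X p) (span_pow_X_eq_top hp).ge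

theorem exists_monic_natDegree_aeval_eq_zero {p : k[X]} (hp : 0 < p.degree) (q : k[X]) :
    ∃ f : (Algebra.adjoin k {p})[X], f.Monic ∧ f.natDegree = p.natDegree ∧ aeval q f = 0 := by
  have b := basisPowX hp
  have : Module.Free (Algebra.adjoin k {p}) k[X] := .of_basis b
  have : Module.Finite (Algebra.adjoin k {p}) k[X] := .of_basis b
  refine ⟨(Algebra.lmul _ _ q).charpoly, LinearMap.charpoly_monic _, ?_,
    Algebra.aeval_self_charpoly_lmul q⟩
  rw [LinearMap.charpoly_natDegree, Module.finrank_eq_card_basis b, Fintype.card_fin]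

theorem X_mem_adjoin_adjoin_of_adjoin_pair_eq_top {p q : k[X]}
    (hgen : Algebra.adjoin k {p, q} = ⊤) : X ∈ Algebra.adjoin (Algebra.adjoin k {p}) {q} := by
  rw [← Subalgebra.mem_restrictScalars k, ← Algebra.adjoin_union_eq_adjoin_adjoin,
    ← Set.insert_eq, hgen]
  trivial

theorem adjoin_pair_ne_top_of_natDegree_eq_add_one {p q : k[X]} (hp : 2 ≤ p.natDegree)
    (hq : q.natDegree = p.natDegree + 1) : Algebra.adjoin k {p, q} ≠ ⊤ := by
  intro hgen
  have hpos : 0 < p.degree := natDegree_pos_iff_degree_pos.1 (by omega)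
  obtain ⟨f, hmonic, hfdeg, hf⟩ := exists_monic_natDegree_aeval_eq_zero hpos q
  have hX := mem_span_pow_of_aeval_eq_zero hmonic hf
    (X_mem_adjoin_adjoin_of_adjoin_pair_eq_top hgen)
  rw [hfdeg] at hX
  obtain ⟨c, hc⟩ := Submodule.mem_span_range_iff_exists_fun _ |>.1 hX
  have hsup := degree_sum_smul_pow_eq_sup
    (by rw [hq, Nat.coprime_self_add_left]; exact Nat.coprime_one_left _) c
  rw [hc, degree_X] at hsup
  obtain ⟨i, -, hi⟩ := Finset.exists_mem_eq_sup _ ⟨⟨0, by omega⟩, Finset.mem_univ _⟩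
    fun i => (c i • q ^ (i : ℕ)).degree
  rw [← hsup] at hi
  have hne : c i • q ^ (i : ℕ) ≠ 0 := fun h => by simp [h] at hi
  have hdeg : (c i : k[X]).natDegree + i * q.natDegree = 1 := by
    rw [← natDegree_smul_pow hne]
    exact natDegree_eq_of_degree_eq_some hi.symm
  rcases Nat.eq_zero_or_pos i with hi0 | hi0
  · rw [hi0, zero_mul, add_zero] at hdeg
    have := Nat.le_of_dvd one_pos (hdeg ▸ natDegree_dvd_of_mem_adjoin_singleton (c i).2)
    omega
  · nlinarith

end Field

theorem stmt8_general {k : Type*} [Field k] (p q : Polynomial k)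
    (hgen : Algebra.adjoin k ({p, q} : Set (Polynomial k)) = ⊤)
    (hdeg : p.degree < q.degree) :
    p.degree = 1 ∨ q.degree = 1 ∨ (2 ≤ p.degree ∧ p.degree + 2 ≤ q.degree) := by
  have hq : q ≠ 0 := ne_zero_of_degree_gt hdeg
  rcases le_or_gt p.degree 0 with hp | hp
  · obtain ⟨c, rfl⟩ : ∃ c, p = C c := ⟨_, eq_C_of_degree_le_zero hp⟩
    have hX : X ∈ Algebra.adjoin k {q} := by
      rw [← algebraMap_eq, Algebra.adjoin_insert_algebraMap] at hgen
      rw [hgen]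
      trivial
    rw [degree_eq_natDegree hq, natDegree_eq_one_of_X_mem_adjoin_singleton hX]
    exact .inr (.inl rfl)
  have hp0 : p ≠ 0 := ne_zero_of_degree_gt hp
  have hlt := natDegree_lt_natDegree hp0 hdeg
  have hne : 2 ≤ p.natDegree → q.natDegree ≠ p.natDegree + 1 := fun h2 h =>
    adjoin_pair_ne_top_of_natDegree_eq_add_one h2 h hgen
  simp only [degree_eq_natDegree hp0, degree_eq_natDegree hq] at hp ⊢
  norm_cast at hp ⊢
  omega

theorem stmt8 {k : Type*} [Field k] [IsAlgClosed k] (p q : Polynomial k)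
    (hgen : Algebra.adjoin k ({p, q} : Set (Polynomial k)) = ⊤)
    (hdeg : p.degree < q.degree) :
    p.degree = 1 ∨ q.degree = 1 ∨ (2 ≤ p.degree ∧ p.degree + 2 ≤ q.degree) :=
  stmt8_general p q hgen hdeg
end

section
/- Let k be an algebraically closed field of characteristic p > 0. (1) For every invertible 3×3 matrix A over k there exist a nonzero vector v ∈ k³ and a nonzero scalar μ ∈ k such that A · v^(p) = μ·v, where v^(p) denotes the vector obtained by raising each coordinate of v to the p-th power. (2) For every invertible 3×3 matrix B over k there exist a nonzero vector v ∈ k³ and a nonzero scalar μ ∈ k such that (B·v)^(p) = μ·v. -/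
/-!
Both parts say that an injective Frobenius-semilinear endomorphism `φ` of `k³` (namely
`v ↦ A v^(p)` and `v ↦ (B v)^(p)`) has a nonzero fixed vector, which we prove in any
finite dimension. Take the first linear relation `f (m+1) = ∑ a i • f i` among the iterates
`f i = φ^[i] v₀`; injectivity and perfectness of `k` force `a 0 ≠ 0`. The vector
`∑ c i • f i` is fixed by `φ` as soon as `c 0 = a 0 * t^p`, `c (i+1) = c i ^ p + a (i+1) * t^p`
and `c m = t`. Here `c m` is a polynomial `q` in `t` of degree `p^(m+1)` divisible by `t^p`,
so `q t = t` has a nonzero root: a root of the nonconstant polynomial `q / X - 1`.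
-/

open Polynomial Finset

section FrobRec

variable {R : Type*} [CommSemiring R] (p : ℕ)

def frobRec (a : ℕ → R) (t : R) : ℕ → R
  | 0 => a 0 * t ^ p
  | i + 1 => frobRec a t i ^ p + a (i + 1) * t ^ p

variable {p}

theorem map_frobRec {S : Type*} [CommSemiring S] (f : R →+* S) (a : ℕ → R) (t : R) (i : ℕ) :
    f (frobRec p a t i) = frobRec p (fun j => f (a j)) (f t) i := by
  induction i with
  | zero => simp [frobRec]
  | succ i ih => simp [frobRec, ih]

theorem pow_dvd_frobRec (hp : p ≠ 0) (a : ℕ → R) (t : R) (i : ℕ) :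
    t ^ p ∣ frobRec p a t i := by
  induction i with
  | zero => exact dvd_mul_left _ _
  | succ i ih => exact dvd_add (ih.trans (dvd_pow_self _ hp)) (dvd_mul_left _ _)

theorem natDegree_frobRec_X {k : Type*} [Field k] (hp : 2 ≤ p) {a : ℕ → k} (ha : a 0 ≠ 0)
    (i : ℕ) : (frobRec p (fun j => C (a j)) X i).natDegree = p ^ (i + 1) := by
  induction i with
  | zero => simp [frobRec, natDegree_C_mul_X_pow p _ ha]
  | succ i ih =>
    have hlt : (C (a (i + 1)) * X ^ p).natDegree <
        (frobRec p (fun j => C (a j)) X i ^ p).natDegree := by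
      rw [natDegree_pow, ih]
      calc (C (a (i + 1)) * X ^ p).natDegree ≤ p := natDegree_C_mul_X_pow_le _ _
        _ < p * p ^ (i + 1) := lt_mul_right (by omega) (Nat.one_lt_pow (by omega) (by omega))
    rw [frobRec, natDegree_add_eq_left_of_natDegree_lt hlt, natDegree_pow, ih, pow_succ' p (i + 1)]

theorem exists_frobRec_eq_self {k : Type*} [Field k] [IsAlgClosed k] (hp : 2 ≤ p) {a : ℕ → k}
    (ha : a 0 ≠ 0) (m : ℕ) : ∃ t ≠ 0, frobRec p a t m = t := by
  set q := frobRec p (fun j => C (a j)) X m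
  have hq : ∀ t, q.eval t = frobRec p a t m := fun t => by
    simpa using map_frobRec (evalRingHom t) (fun j => C (a j)) X m
  obtain ⟨r, hr⟩ : X ^ p ∣ q := pow_dvd_frobRec (by omega) _ _ m
  have hr0 : r ≠ 0 := by
    rintro rfl
    have hdeg : q.natDegree = p ^ (m + 1) := natDegree_frobRec_X hp ha m
    rw [hr, mul_zero, natDegree_zero] at hdeg
    exact (pow_pos (by omega) _).ne hdeg
  obtain ⟨t, ht⟩ := IsAlgClosed.exists_root (X ^ (p - 1) * r - 1) <| by
    refine (natDegree_pos_iff_degree_pos.mp ?_).ne'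
    rw [← C_1, natDegree_sub_C, natDegree_X_pow_mul _ hr0]
    omega
  have ht1 : t ^ (p - 1) * r.eval t = 1 := by simpa [sub_eq_zero] using ht
  refine ⟨t, fun ht0 => ?_, ?_⟩
  · simp [ht0, zero_pow (show p - 1 ≠ 0 by omega)] at ht1
  · rw [← hq, hr, eval_mul, eval_X_pow, ← Nat.sub_add_cancel (by omega : 1 ≤ p), pow_succ,
      mul_comm _ t, mul_assoc, ht1, mul_one]

end FrobRec

theorem exists_linearIndepOn_range_and_eq_sum {k V : Type*} [Field k] [AddCommGroup V]
    [Module k V] [FiniteDimensional k V] {f : ℕ → V} (hf : f 0 ≠ 0) :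
    ∃ (m : ℕ) (a : ℕ → k), LinearIndepOn k f (range (m + 1)) ∧
      f (m + 1) = ∑ i ∈ range (m + 1), a i • f i := by
  classical
  have hdep : ∃ n, ¬LinearIndepOn k f (range (n + 1)) := by
    refine ⟨Module.finrank k V, fun h => ?_⟩
    have := LinearIndependent.fintype_card_le_finrank h
    simp at this
  obtain ⟨m, hm⟩ : ∃ m, Nat.find hdep = m + 1 := by
    refine Nat.exists_eq_add_one.mpr (Nat.pos_of_ne_zero fun h0 => ?_)
    have := Nat.find_spec hdep
    rw [h0] at this
    exact this (by simpa using LinearIndepOn.singleton (R := k) hf)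
  have hind : LinearIndepOn k f (range (m + 1)) :=
    not_not.mp (Nat.find_min hdep (by omega))
  have hmem : f (m + 1) ∈ Submodule.span k (f '' (range (m + 1) : Set ℕ)) := by
    by_contra hnot
    apply hm ▸ Nat.find_spec hdep
    rw [range_add_one, coe_insert, linearIndepOn_insert (by simp)]
    exact ⟨hind, hnot⟩
  obtain ⟨l, hl, hlf⟩ := (Finsupp.mem_span_image_iff_linearCombination k).mp hmem
  refine ⟨m, l, hind, ?_⟩
  rw [← hlf, Finsupp.linearCombination_apply, Finsupp.sum_of_support_subset _ hl]
  simp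

section Semilinear

variable {k V : Type*} [Field k] {p : ℕ} [ExpChar k p] [AddCommGroup V] [Module k V]
  {φ : V →ₛₗ[frobenius k p] V} {f : ℕ → V}

theorem coeff_zero_ne_zero_of_injective [PerfectRing k p] (hφ : Function.Injective φ)
    (hf : ∀ i, f (i + 1) = φ (f i)) {m : ℕ} {a : ℕ → k}
    (hind : LinearIndepOn k f (range (m + 1)))
    (hrel : f (m + 1) = ∑ i ∈ range (m + 1), a i • f i) : a 0 ≠ 0 := by
  intro ha0
  choose b hb using fun i => surjective_frobenius k p (a (i + 1))
  have hfm : f m = ∑ i ∈ range m, b i • f i := by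
    refine hφ ?_
    rw [← hf, hrel, sum_range_succ', ha0, zero_smul, add_zero, map_sum]
    simp only [map_smulₛₗ, hb, hf]
  rw [range_add_one, coe_insert, linearIndepOn_insert (by simp)] at hind
  exact hind.2 <| hfm ▸
    Submodule.sum_smul_mem _ _ fun i hi => Submodule.subset_span ⟨i, hi, rfl⟩

theorem apply_sum_frobRec_smul (hf : ∀ i, f (i + 1) = φ (f i)) {m : ℕ} {a : ℕ → k}
    (hrel : f (m + 1) = ∑ i ∈ range (m + 1), a i • f i) {t : k} (ht : frobRec p a t m = t) :
    φ (∑ i ∈ range (m + 1), frobRec p a t i • f i) =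
      ∑ i ∈ range (m + 1), frobRec p a t i • f i := by
  simp only [map_sum, map_smulₛₗ, frobenius_def, ← hf]
  rw [sum_range_succ, ht, hrel, smul_sum, sum_range_succ' _ m, sum_range_succ' _ m,
    ← add_assoc, ← sum_add_distrib]
  simp only [frobRec, smul_smul, add_smul, mul_comm (t ^ p)]

theorem exists_ne_zero_apply_eq_self [IsAlgClosed k] [CharP k p] [Fact p.Prime]
    [FiniteDimensional k V] [Nontrivial V] (hφ : Function.Injective φ) :
    ∃ v ≠ 0, φ v = v := by
  obtain ⟨v₀, hv₀⟩ := exists_ne (0 : V)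
  set f : ℕ → V := fun i => (⇑φ)^[i] v₀
  have hf : ∀ i, f (i + 1) = φ (f i) := fun i => Function.iterate_succ_apply' _ _ _
  obtain ⟨m, a, hind, hrel⟩ := exists_linearIndepOn_range_and_eq_sum (k := k) (f := f) hv₀
  obtain ⟨t, ht0, ht⟩ := exists_frobRec_eq_self (Fact.out : p.Prime).two_le
    (coeff_zero_ne_zero_of_injective hφ hf hind hrel) m
  refine ⟨∑ i ∈ range (m + 1), frobRec p a t i • f i, fun h0 => ht0 ?_,
    apply_sum_frobRec_smul hf hrel ht⟩
  rw [← ht]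
  exact linearIndepOn_finset_iff.mp hind _ h0 m (self_mem_range_succ m)

end Semilinear

def RingHom.compLeftₛₗ {R S : Type*} [Semiring R] [Semiring S] (σ : R →+* S) (ι : Type*) :
    (ι → R) →ₛₗ[σ] (ι → S) where
  toFun v i := σ (v i)
  map_add' _ _ := funext fun _ => map_add σ _ _
  map_smul' _ _ := funext fun _ => map_mul σ _ _

theorem stmt14 {k : Type*} [Field k] [IsAlgClosed k] (p : ℕ) [CharP k p]
    (hp : 0 < p) :
    (∀ A : Matrix (Fin 3) (Fin 3) k, IsUnit A.det →
      ∃ (v : Fin 3 → k) (mu : k), v ≠ 0 ∧ mu ≠ 0 ∧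
        A.mulVec (fun i => v i ^ p) = mu • v) ∧
    (∀ B : Matrix (Fin 3) (Fin 3) k, IsUnit B.det →
      ∃ (v : Fin 3 → k) (mu : k), v ≠ 0 ∧ mu ≠ 0 ∧
        (fun i => (B.mulVec v) i ^ p) = mu • v) := by
  have : NeZero p := ⟨hp.ne'⟩
  have := CharP.char_is_prime_of_pos k p
  set F := (frobenius k p).compLeftₛₗ (Fin 3)
  have hF : Function.Injective F := fun u v huv =>
    funext fun i => frobenius_inj k p (congrFun huv i)
  constructor
  · intro A hA
    obtain ⟨v, hv0, hv⟩ := exists_ne_zero_apply_eq_self (φ := A.mulVecLin.comp F)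
      ((Matrix.mulVec_injective_iff_isUnit.mpr ((A.isUnit_iff_isUnit_det).mpr hA)).comp hF)
    exact ⟨v, 1, hv0, one_ne_zero, by rw [one_smul]; exact hv⟩
  · intro B hB
    obtain ⟨v, hv0, hv⟩ := exists_ne_zero_apply_eq_self (φ := F.comp B.mulVecLin)
      (hF.comp (Matrix.mulVec_injective_iff_isUnit.mpr ((B.isUnit_iff_isUnit_det).mpr hB)))
    exact ⟨v, 1, hv0, one_ne_zero, by rw [one_smul]; exact hv⟩
end

section
/- Let k be an algebraically closed field and f₁,…,fₙ ∈ k[x₁,…,xₙ]. Then the determinant of the Jacobian matrix (∂fᵢ/∂xⱼ)ᵢⱼ is a nonzero constant if and only if for every λ₀ ∈ k and every (λ₁,…,λₙ) ∈ kⁿ ∖ {0}, the polynomial g = λ₀ + λ₁f₁ + ⋯ + λₙfₙ and its partial derivatives ∂g/∂x₁, …, ∂g/∂xₙ have no common zero in kⁿ. -/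
/-!
A polynomial over an algebraically closed field is a nonzero constant iff it has no zeros
(Nullstellensatz), so the Jacobian determinant is a nonzero constant iff it vanishes nowhere.
At a point `a`, with `g = l0 + ∑ lᵢ fᵢ`, the gradient of `g` is the row vector `l` times the
Jacobian matrix at `a`; hence some `l ≠ 0` kills the gradient at `a` iff the determinant vanishes
at `a`, and `l0` can then be chosen so that `g a = 0` as well.
-/

open MvPolynomial
open scoped Matrix

namespace MvPolynomial

section Nullstellensatz

variable {σ k : Type*} [Finite σ] [Field k] [IsAlgClosed k]

theorem exists_eval_eq_zero_of_not_isUnit {p : MvPolynomial σ k} (hp : ¬IsUnit p) :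
    ∃ x : σ → k, eval x p = 0 := by
  obtain ⟨I, hI, hpI⟩ := Ideal.exists_le_maximal _ (Ideal.span_singleton_ne_top hp)
  obtain ⟨x, rfl⟩ := eq_vanishingIdeal_singleton_of_isMaximal k hI
  exact ⟨x, (mem_vanishingIdeal_singleton_iff x p).mp (hpI (Ideal.mem_span_singleton_self p))⟩

theorem isUnit_iff_forall_eval_ne_zero {p : MvPolynomial σ k} :
    IsUnit p ↔ ∀ x : σ → k, eval x p ≠ 0 := by
  refine ⟨fun hp x => (hp.map (eval x)).ne_zero, fun h => ?_⟩
  by_contra hp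
  obtain ⟨x, hx⟩ := exists_eval_eq_zero_of_not_isUnit hp
  exact h x hx

theorem exists_eq_C_ne_zero_iff_forall_eval_ne_zero {p : MvPolynomial σ k} :
    (∃ c : k, c ≠ 0 ∧ p = C c) ↔ ∀ x : σ → k, eval x p ≠ 0 := by
  simp only [← isUnit_iff_forall_eval_ne_zero, isUnit_iff_eq_C_of_isReduced, isUnit_iff_ne_zero]

end Nullstellensatz

section Jacobian

variable {ι σ R : Type*} [CommRing R]

noncomputable def jacobian (f : ι → MvPolynomial σ R) : Matrix ι σ (MvPolynomial σ R) :=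
  Matrix.of fun i j => pderiv j (f i)

theorem eval_pderiv_C_add_sum_C_mul [Fintype ι] (f : ι → MvPolynomial σ R) (l0 : R) (l : ι → R)
    (a : σ → R) (j : σ) :
    eval a (pderiv j (C l0 + ∑ i, C (l i) * f i)) = (l ᵥ* (jacobian f).map (eval a)) j := by
  simp [jacobian, Matrix.vecMul, dotProduct, map_sum]

end Jacobian

theorem exists_singular_combination_iff_eval_det_jacobian_eq_zero {σ k : Type*} [Fintype σ]
    [DecidableEq σ] [Field k] (f : σ → MvPolynomial σ k) (a : σ → k) :
    (∃ (l0 : k) (l : σ → k), l ≠ 0 ∧ eval a (C l0 + ∑ i, C (l i) * f i) = 0 ∧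
        ∀ j, eval a (pderiv j (C l0 + ∑ i, C (l i) * f i)) = 0) ↔
      eval a (jacobian f).det = 0 := by
  have gradient_eq_zero_iff (l0 : k) (l : σ → k) :
      (∀ j, eval a (pderiv j (C l0 + ∑ i, C (l i) * f i)) = 0) ↔
        l ᵥ* (jacobian f).map (eval a) = 0 := by
    simp only [eval_pderiv_C_add_sum_C_mul, _root_.funext_iff, Pi.zero_apply]
  rw [RingHom.map_det, RingHom.mapMatrix_apply, ← Matrix.exists_vecMul_eq_zero_iff]
  constructor
  · rintro ⟨l0, l, hl, -, hgrad⟩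
    exact ⟨l, hl, (gradient_eq_zero_iff l0 l).mp hgrad⟩
  · rintro ⟨l, hl, hgrad⟩
    exact ⟨-eval a (∑ i, C (l i) * f i), l, hl, by simp, (gradient_eq_zero_iff _ l).mpr hgrad⟩

end MvPolynomial

theorem stmt15 {k : Type*} [Field k] [IsAlgClosed k] (n : ℕ)
    (f : Fin n → MvPolynomial (Fin n) k) :
    ((∃ c : k, c ≠ 0 ∧
        (Matrix.of fun i j => pderiv j (f i)).det = C c) ↔
      (∀ (l0 : k) (l : Fin n → k), l ≠ 0 →
        ¬∃ a : Fin n → k,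
          eval a (C l0 + ∑ i, C (l i) * f i) = 0 ∧
          ∀ j, eval a (pderiv j (C l0 + ∑ i, C (l i) * f i)) = 0)) := by
  change (∃ c : k, c ≠ 0 ∧ (jacobian f).det = C c) ↔ _
  simp only [exists_eq_C_ne_zero_iff_forall_eval_ne_zero, ne_eq,
    ← exists_singular_combination_iff_eval_det_jacobian_eq_zero, not_exists, not_and]
  exact ⟨fun h l0 l hl a => h a l0 l hl, fun h a l0 l hl => h l0 l hl a⟩
end
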